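/- If G is a finitely generated group admitting a surjective homomorphism onto ℤ (i.e., G is indicable), then G has arbitrarily large finite quotients; consequently, for every positive integer n, G admits a finite generating set with respect to which its dead-end depth is at least n. -/

import Mathlib

/-- Word length of `g` with respect to generating set `S` (using `S ∪ S⁻¹`). -/
noncomputable def wl {G : Type*} [Group G] (S : Set G) (g : G) : ℕ :=
  sInf {n | ∃ l : List G, (∀ x ∈ l, x ∈ S ∨ x⁻¹ ∈ S) ∧ l.length = n ∧ l.prod = g}

/-- Word metric with respect to `S`. -/
noncomputable def wdist {G : Type*} [Group G] (S : Set G) (g h : G) : ℕ := wl S (g⁻¹ * h)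

/-- Dead-end depth of `g` with respect to `A`: distance to the nearest element strictly
farther from the identity, `⊤` if none exists. -/
noncomputable def depth {G : Type*} [Group G] (A : Set G) (g : G) : ℕ∞ :=
  sInf ((fun g' => (wdist A g g' : ℕ∞)) '' {g' | wl A g < wl A g'})

/-- Partial product `u 0 * u 1 * ⋯ * u (i-1)`. -/
def pprod {M : Type*} [Monoid M] (u : ℕ → M) (i : ℕ) : M := ((List.range i).map u).prod

/-!
Reduce the surjection `G → ℤ` modulo `2k` (with `k = 4n`) to get `χ : G → ℤ/2k` and `t` with
`χ t = 1`. For a finite generating set `T ∋ t`, let `A` consist of the elements of `T`-length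
at most `6k` with `χ`-value `1`. The `χ`-value of an `A`-word of length `L` is a sum of `L` signs,
so `t ^ k`, whose value is the antipode `k` of `ℤ/2k`, has `A`-length at least `k`. Conversely,
peeling blocks of `4k` letters off a `T`-word and pushing each into `χ⁻¹(1)` with fewer than
`2k` letters `t` shows that `T`-length at most `2k d` and `χ`-value `d` force `A`-length at most `d`.
For `g` at `A`-distance less than `n` from `t ^ k`, the `T`-length of `g` is at most
`k + 6k(n - 1)` and one of `g`, `g⁻¹` has value `k - |e|` with `|e| < n`, so `g` has `A`-length
at most `k`: hence `t ^ k` has depth at least `n`.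
-/

section WordLength

variable {G : Type*} [Group G] {S : Set G}

theorem wl_le_length {l : List G} (hl : ∀ x ∈ l, x ∈ S ∨ x⁻¹ ∈ S) : wl S l.prod ≤ l.length :=
  Nat.sInf_le ⟨l, hl, rfl, rfl⟩

theorem exists_list_length_eq_wl (hS : Subgroup.closure S = ⊤) (x : G) :
    ∃ l : List G, (∀ y ∈ l, y ∈ S ∨ y⁻¹ ∈ S) ∧ l.length = wl S x ∧ l.prod = x := by
  have hx : x ∈ Submonoid.closure (S ∪ S⁻¹) := by
    rw [← Subgroup.closure_toSubmonoid, hS]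
    trivial
  obtain ⟨l, hl, rfl⟩ := Submonoid.exists_list_of_mem_closure hx
  exact Nat.sInf_mem (s := {n | ∃ l' : List G, (∀ y ∈ l', y ∈ S ∨ y⁻¹ ∈ S) ∧ l'.length = n ∧
    l'.prod = l.prod}) ⟨l.length, l, hl, rfl, rfl⟩

theorem wl_induction (hS : Subgroup.closure S = ⊤) {P : G → ℕ → Prop} (one : P 1 0)
    (mul : ∀ a x d, (a ∈ S ∨ a⁻¹ ∈ S) → P x d → P (a * x) (d + 1)) (x : G) :
    P x (wl S x) := by
  obtain ⟨l, hl, hlen, rfl⟩ := exists_list_length_eq_wl hS x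
  rw [← hlen]
  clear hlen
  induction l with
  | nil => exact one
  | cons a l ih =>
    rw [List.prod_cons]
    exact mul a _ _ (hl a (by simp)) (ih fun y hy => hl y (by simp [hy]))

theorem wl_mul_le (hS : Subgroup.closure S = ⊤) (x y : G) :
    wl S (x * y) ≤ wl S x + wl S y := by
  obtain ⟨l, hl, hlen, rfl⟩ := exists_list_length_eq_wl hS x
  obtain ⟨l', hl', hlen', rfl⟩ := exists_list_length_eq_wl hS y
  rw [← hlen, ← hlen', ← List.length_append, ← List.prod_append]
  refine wl_le_length fun z hz => ?_
  rcases List.mem_append.1 hz with hz | hz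
  exacts [hl z hz, hl' z hz]

theorem wl_inv (hS : Subgroup.closure S = ⊤) (x : G) : wl S x⁻¹ = wl S x := by
  suffices h : ∀ x : G, wl S x⁻¹ ≤ wl S x from le_antisymm (h x) (by simpa using h x⁻¹)
  intro x
  obtain ⟨l, hl, hlen, rfl⟩ := exists_list_length_eq_wl hS x
  rw [List.prod_inv_reverse, ← hlen]
  refine (wl_le_length fun y hy => ?_).trans (by simp)
  obtain ⟨z, hz, rfl⟩ := List.mem_map.1 (List.mem_reverse.1 hy)
  simpa [or_comm] using hl z hz

theorem wl_one : wl S (1 : G) = 0 :=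
  Nat.eq_zero_of_le_zero (wl_le_length (l := []) (by simp))

theorem wl_le_one_of_mem {x : G} (hx : x ∈ S) : wl S x ≤ 1 := by
  simpa using wl_le_length (l := [x]) (by simp [hx])

theorem wl_pow_le {x : G} (hx : x ∈ S) (j : ℕ) : wl S (x ^ j) ≤ j := by
  simpa using wl_le_length (l := List.replicate j x) (by simp [hx])

theorem exists_mul_eq_of_wl_le_add (hS : Subgroup.closure S = ⊤) {x : G} {a b : ℕ}
    (h : wl S x ≤ a + b) : ∃ y z, y * z = x ∧ wl S y ≤ a ∧ wl S z ≤ b := by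
  obtain ⟨l, hl, hlen, rfl⟩ := exists_list_length_eq_wl hS x
  refine ⟨(l.take a).prod, (l.drop a).prod, by rw [← List.prod_append, List.take_append_drop],
    (wl_le_length fun y hy => hl y (List.mem_of_mem_take hy)).trans ?_,
    (wl_le_length fun y hy => hl y (List.mem_of_mem_drop hy)).trans ?_⟩
  · simp
  · simp only [List.length_drop]
    omega

theorem finite_setOf_wl_le (hSf : S.Finite) (hS : Subgroup.closure S = ⊤) (R : ℕ) :
    {x : G | wl S x ≤ R}.Finite := by
  have : Finite ↥(S ∪ S⁻¹) := (hSf.union hSf.inv).to_subtype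
  refine ((List.finite_length_le ↥(S ∪ S⁻¹) R).image fun l => (l.map Subtype.val).prod).subset ?_
  intro x hx
  obtain ⟨l, hl, hlen, rfl⟩ := exists_list_length_eq_wl hS x
  lift l to List ↥(S ∪ S⁻¹) using hl
  refine ⟨l, ?_, rfl⟩
  show l.length ≤ R
  rw [← List.length_map Subtype.val, hlen]
  exact hx

theorem wl_le_mul_wl {T A : Set G} (hT : Subgroup.closure T = ⊤)
    (hA : Subgroup.closure A = ⊤) {R : ℕ} (hR : ∀ a ∈ A, wl T a ≤ R) (x : G) :
    wl T x ≤ R * wl A x := by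
  refine wl_induction (P := fun x d => wl T x ≤ R * d) hA (by simp [wl_one]) (fun a x d ha hx => ?_) x
  have hRa : wl T a ≤ R := ha.elim (hR a) fun ha => wl_inv hT a ▸ hR _ ha
  calc wl T (a * x) ≤ wl T a + wl T x := wl_mul_le hT a x
    _ ≤ R * (d + 1) := by nlinarith

theorem le_depth_of_forall_wl_lt {A : Set G} {g : G} {n : ℕ}
    (h : ∀ y, wl A y < n → wl A (g * y) ≤ wl A g) : (n : ℕ∞) ≤ depth A g := by
  refine le_sInf ?_
  rintro _ ⟨g', hg', rfl⟩
  by_contra! hlt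
  have := h (g⁻¹ * g') (by exact_mod_cast hlt)
  rw [mul_inv_cancel_left] at this
  exact absurd hg' (not_lt.2 this)

end WordLength

def ballFiberOne {G : Type*} [Group G] {m : ℕ} (χ : G →* Multiplicative (ZMod m)) (T : Set G)
    (R : ℕ) : Set G :=
  {x | wl T x ≤ R ∧ χ x = .ofAdd 1}

section ResidueBall

variable {G : Type*} [Group G] {m : ℕ} {χ : G →* Multiplicative (ZMod m)} {T : Set G} {t : G}

theorem exists_toAdd_eq_of_wl {A : Set G} (hA : Subgroup.closure A = ⊤)
    (hχA : ∀ a ∈ A, χ a = .ofAdd 1) (x : G) :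
    ∃ e : ℤ, e.natAbs ≤ wl A x ∧ (χ x).toAdd = e := by
  refine wl_induction (P := fun x d => ∃ e : ℤ, e.natAbs ≤ d ∧ (χ x).toAdd = e) hA
    ⟨0, le_rfl, by simp⟩ (fun a x d ha ⟨e, he, hx⟩ => ?_) x
  rcases ha with ha | ha
  · exact ⟨1 + e, by omega, by simp [hx, hχA a ha]⟩
  · have hχa : (χ a).toAdd = -1 := by
      simpa [neg_eq_iff_eq_neg] using congrArg Multiplicative.toAdd (hχA _ ha)
    exact ⟨-1 + e, by omega, by simp [hx, hχa]⟩

theorem le_wl_of_toAdd_eq {A : Set G} (hA : Subgroup.closure A = ⊤)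
    (hχA : ∀ a ∈ A, χ a = .ofAdd 1) {x : G} {d : ℕ} (hx : (χ x).toAdd = d) (hd : 2 * d ≤ m) :
    d ≤ wl A x := by
  obtain ⟨e, he, hxe⟩ := exists_toAdd_eq_of_wl hA hχA x
  by_contra! hlt
  have hdvd : (m : ℤ) ∣ (d : ℤ) - e :=
    (ZMod.intCast_eq_intCast_iff_dvd_sub _ _ _).1 (by rw [← hxe, hx]; push_cast; rfl)
  have := Int.le_of_dvd (by omega) hdvd
  omega

theorem ballFiberOne_finite (hTf : T.Finite) (hT : Subgroup.closure T = ⊤) (R : ℕ) :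
    (ballFiberOne χ T R).Finite :=
  (finite_setOf_wl_le hTf hT R).subset fun _ hx => hx.1

theorem mem_ballFiberOne {R : ℕ} (hR : 1 ≤ R) (ht : t ∈ T) (hχt : χ t = .ofAdd 1) :
    t ∈ ballFiberOne χ T R :=
  ⟨(wl_le_one_of_mem ht).trans hR, hχt⟩

theorem closure_ballFiberOne [NeZero m] (hT : Subgroup.closure T = ⊤) (ht : t ∈ T)
    (hχt : χ t = .ofAdd 1) {R : ℕ} (hR : m ≤ R) :
    Subgroup.closure (ballFiberOne χ T R) = ⊤ := by
  have htA := mem_ballFiberOne (hR.trans' NeZero.one_le) ht hχt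
  rw [eq_top_iff, ← hT, Subgroup.closure_le]
  intro s hs
  set c := (1 - (χ s).toAdd).val
  have hsc : s * t ^ c ∈ ballFiberOne χ T R := by
    refine ⟨?_, ?_⟩
    · calc wl T (s * t ^ c) ≤ 1 + c :=
            (wl_mul_le hT _ _).trans (add_le_add (wl_le_one_of_mem hs) (wl_pow_le ht c))
        _ ≤ R := by have := ZMod.val_lt (1 - (χ s).toAdd); omega
    · apply Multiplicative.toAdd.injective
      simp [hχt, c]
  have : s = s * t ^ c * (t ^ c)⁻¹ := by group
  rw [this]
  exact mul_mem (Subgroup.subset_closure hsc)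
    (inv_mem (pow_mem (Subgroup.subset_closure htA) c))

theorem wl_ballFiberOne_le [NeZero m] (hT : Subgroup.closure T = ⊤) (ht : t ∈ T)
    (hχt : χ t = .ofAdd 1) (d : ℕ) {x : G} (hx : (χ x).toAdd = d + 1)
    (hxT : wl T x ≤ (d + 1) * m) : wl (ballFiberOne χ T (3 * m)) x ≤ d + 1 := by
  set A := ballFiberOne χ T (3 * m)
  have hA := closure_ballFiberOne hT ht hχt (R := 3 * m) (by omega)
  induction d generalizing x with
  | zero =>
    exact wl_le_one_of_mem ⟨by omega, Multiplicative.toAdd.injective (by simpa using hx)⟩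
  | succ d ih =>
    -- Peel off a block `z` of `2m` letters and push it into `χ⁻¹(1)` with `c < m` letters `t`.
    obtain ⟨y, z, rfl, hy, hz⟩ :=
      exists_mul_eq_of_wl_le_add hT (a := d * m) (b := 2 * m) (hxT.trans_eq (by ring))
    set c := ((χ z).toAdd - 1).val
    have hcm : c < m := ZMod.val_lt _
    have hc : (c : ZMod m) = (χ z).toAdd - 1 := ZMod.natCast_zmod_val _
    have haA : (t ^ c)⁻¹ * z ∈ A := by
      refine ⟨?_, ?_⟩
      · calc wl T ((t ^ c)⁻¹ * z) ≤ c + 2 * m := by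
              grw [wl_mul_le hT, wl_inv hT, wl_pow_le ht, hz]
          _ ≤ 3 * m := by omega
      · apply Multiplicative.toAdd.injective
        simp [hχt, hc]
    have hy' : wl A (y * t ^ c) ≤ d + 1 := by
      refine ih ?_ ?_
      · simp only [map_mul, toAdd_mul, map_pow, toAdd_pow, hχt, toAdd_ofAdd] at hx ⊢
        push_cast at hx
        rw [nsmul_one, hc]
        linear_combination hx
      · calc wl T (y * t ^ c) ≤ d * m + c := by grw [wl_mul_le hT, wl_pow_le ht, hy]
          _ ≤ (d + 1) * m := by rw [add_mul]; omega
    calc wl A (y * z) = wl A (y * t ^ c * ((t ^ c)⁻¹ * z)) := by group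
      _ ≤ d + 1 + 1 := by grw [wl_mul_le hA, hy', wl_le_one_of_mem haA]

end ResidueBall

theorem le_depth_ballFiberOne {G : Type*} [Group G] {T : Set G} {t : G} {n k : ℕ} (hn : 0 < n)
    (hk : 4 * n ≤ k) {χ : G →* Multiplicative (ZMod (2 * k))} (hT : Subgroup.closure T = ⊤) (ht : t ∈ T)
    (hχt : χ t = .ofAdd 1) :
    (n : ℕ∞) ≤ depth (ballFiberOne χ T (3 * (2 * k))) (t ^ k) := by
  have : NeZero (2 * k) := ⟨by omega⟩
  set A := ballFiberOne χ T (3 * (2 * k))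
  have hA : Subgroup.closure A = ⊤ := closure_ballFiberOne hT ht hχt (by omega)
  have hχA : ∀ a ∈ A, χ a = .ofAdd 1 := fun a ha => ha.2
  have hχtk : (χ (t ^ k)).toAdd = k := by simp [hχt]
  refine le_depth_of_forall_wl_lt fun y (hy : wl A y < n) =>
    le_trans ?_ (le_wl_of_toAdd_eq hA hχA hχtk le_rfl)
  obtain ⟨e, he, hye⟩ := exists_toAdd_eq_of_wl hA hχA y
  set g := t ^ k * y
  have hgT : wl T g ≤ k + 3 * (2 * k) * (n - 1) := by
    grw [wl_mul_le hT, wl_pow_le ht, wl_le_mul_wl hT hA (fun a ha => ha.1) y]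
    gcongr
    omega
  -- `g` or `g⁻¹` lies in the residue class of `k - |e|`, which is closer to `0` than `k` is.
  obtain ⟨x, hAx, hTx, hχx⟩ : ∃ x, wl A x = wl A g ∧ wl T x = wl T g ∧
      (χ x).toAdd = ((k - e.natAbs - 1 : ℕ) : ZMod (2 * k)) + 1 := by
    rcases le_or_gt e 0 with he0 | he0
    · refine ⟨g, rfl, rfl, ?_⟩
      have h := congrArg (Int.cast : ℤ → ZMod (2 * k))
        (show (k : ℤ) + e = ((k - e.natAbs - 1 : ℕ) : ℤ) + 1 by omega)
      push_cast at h
      simpa only [g, map_mul, toAdd_mul, hχtk, hye] using h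
    · refine ⟨g⁻¹, wl_inv hA g, wl_inv hT g, ?_⟩
      have h := congrArg (Int.cast : ℤ → ZMod (2 * k))
        (show -((k : ℤ) + e) + ((2 * k : ℕ) : ℤ) = ((k - e.natAbs - 1 : ℕ) : ℤ) + 1 by omega)
      rw [Int.cast_add, Int.cast_natCast, ZMod.natCast_self, add_zero] at h
      push_cast at h
      simpa only [g, map_inv, map_mul, toAdd_inv, toAdd_mul, hχtk, hye] using h
  rw [← hAx]
  refine (wl_ballFiberOne_le hT ht hχt _ hχx (hTx ▸ hgT.trans ?_)).trans (by omega)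
  calc k + 3 * (2 * k) * (n - 1) ≤ k + 3 * (2 * k) * n := by gcongr; omega
    _ ≤ (3 * n + 1) * (2 * k) := by nlinarith
    _ ≤ (k - e.natAbs - 1 + 1) * (2 * k) := by gcongr; omega

theorem surjective_toMultiplicative_intCastAddHom_comp {G : Type*} [Group G]
    {π : G →* Multiplicative ℤ} (hπ : Function.Surjective π) (m : ℕ) :
    Function.Surjective ((Int.castAddHom (ZMod m)).toMultiplicative.comp π) :=
  (Multiplicative.ofAdd.surjective.comp <| (ZMod.intCast_surjective).comp
    Multiplicative.toAdd.surjective).comp hπ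

/-- If `G` is finitely generated and indicable (surjects onto `ℤ`), then `G` has arbitrarily
large finite quotients, and hence for every positive `n` admits a finite generating set with
respect to which its dead-end depth is at least `n`. -/
theorem stmt14 {G : Type*} [Group G] [Group.FG G]
    (hind : ∃ π : G →* Multiplicative ℤ, Function.Surjective π) :
    (∀ m : ℕ, ∃ (Q : Type) (_ : Group Q) (_ : Finite Q) (π : G →* Q),
      Function.Surjective π ∧ m ≤ Nat.card Q) ∧
    ∀ n : ℕ, 0 < n → ∃ A : Set G, A.Finite ∧ Subgroup.closure A = ⊤ ∧
      (n : ℕ∞) ≤ ⨆ g : G, depth A g := by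
  obtain ⟨π, hπ⟩ := hind
  have hχ := surjective_toMultiplicative_intCastAddHom_comp hπ
  refine ⟨fun m => ⟨Multiplicative (ZMod (m + 1)), inferInstance, inferInstance, _, hχ (m + 1),
    by simp⟩, fun n hn => ?_⟩
  obtain ⟨S, hS, hSf⟩ := Group.fg_iff.1 ‹Group.FG G›
  have : NeZero (2 * (4 * n)) := ⟨by omega⟩
  obtain ⟨t, hχt⟩ := hχ (2 * (4 * n)) (.ofAdd 1)
  have ht : t ∈ insert t S := Set.mem_insert t S
  have hT : Subgroup.closure (insert t S) = ⊤ :=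
    top_le_iff.1 (hS ▸ Subgroup.closure_mono (Set.subset_insert t S))
  exact ⟨_, ballFiberOne_finite (hSf.insert t) hT _, closure_ballFiberOne hT ht hχt (by omega),
    (le_depth_ballFiberOne hn le_rfl hT ht hχt).trans (le_iSup _ _)⟩
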